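/- For every ρ > 0, the limit as n → ∞ of (2/ρ) ∫_0^∞ ∫_0^∞ e^{2(x+y)/(√n ρ) + 2/(n ρ²)} · erfc((x+y)/√2 + √2/(√n ρ)) dy dx equals 1/ρ. -/

import Mathlib

open Filter Set MeasureTheory

/-- The complementary error function. -/
noncomputable def erfc (y : ℝ) : ℝ :=
  (2 / Real.sqrt Real.pi) * ∫ u in Set.Ioi y, Real.exp (-u ^ 2)

lemma integrable_gauss : MeasureTheory.Integrable (fun u : ℝ => Real.exp (-u ^ 2)) := by
  simpa using integrable_exp_neg_mul_sq (by norm_num : (0:ℝ) < 1)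

lemma gauss_Ioi_zero : ∫ u in Set.Ioi (0:ℝ), Real.exp (-u ^ 2) = Real.sqrt Real.pi / 2 := by
  simpa using integral_gaussian_Ioi 1

lemma integral_Ioi_split (y : ℝ) :
    ∫ u in Set.Ioi y, Real.exp (-u ^ 2)
      = (∫ u in Set.Ioi (0:ℝ), Real.exp (-u ^ 2)) - ∫ u in (0:ℝ)..y, Real.exp (-u ^ 2) := by
  rcases le_total 0 y with hy | hy
  · rw [intervalIntegral.integral_of_le hy]
    have h : Set.Ioc 0 y ∪ Set.Ioi y = Set.Ioi (0:ℝ) := Set.Ioc_union_Ioi_eq_Ioi hy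
    have := MeasureTheory.setIntegral_union (μ := volume) (s := Set.Ioc 0 y) (t := Set.Ioi y)
      (f := fun u : ℝ => Real.exp (-u ^ 2)) (Set.Ioc_disjoint_Ioi le_rfl)
      measurableSet_Ioi (integrable_gauss.integrableOn) (integrable_gauss.integrableOn)
    rw [h] at this
    linarith [this]
  · rw [intervalIntegral.integral_symm, intervalIntegral.integral_of_le hy]
    have h : Set.Ioc y 0 ∪ Set.Ioi 0 = Set.Ioi y := Set.Ioc_union_Ioi_eq_Ioi hy
    have := MeasureTheory.setIntegral_union (μ := volume) (s := Set.Ioc y 0) (t := Set.Ioi 0)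
      (f := fun u : ℝ => Real.exp (-u ^ 2)) (Set.Ioc_disjoint_Ioi le_rfl)
      measurableSet_Ioi (integrable_gauss.integrableOn) (integrable_gauss.integrableOn)
    rw [h] at this
    linarith [this]

lemma sqrt_pi_pos : 0 < Real.sqrt Real.pi := Real.sqrt_pos.2 Real.pi_pos

lemma erfc_eq (y : ℝ) :
    erfc y = 1 - (2 / Real.sqrt Real.pi) * ∫ u in (0:ℝ)..y, Real.exp (-u ^ 2) := by
  rw [erfc, integral_Ioi_split, gauss_Ioi_zero, mul_sub]
  congr 1
  field_simp

lemma erfc_hasDerivAt (y : ℝ) :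
    HasDerivAt erfc (-(2 / Real.sqrt Real.pi * Real.exp (-y ^ 2))) y := by
  have h1 : HasDerivAt (fun t : ℝ => ∫ u in (0:ℝ)..t, Real.exp (-u ^ 2))
      (Real.exp (-y ^ 2)) y := by
    refine intervalIntegral.integral_hasDerivAt_right
      (integrable_gauss.intervalIntegrable) ?_ ?_
    · exact (Real.continuous_exp.comp (continuous_pow 2).neg).stronglyMeasurableAtFilter _ _
    · exact (Real.continuous_exp.comp (continuous_pow 2).neg).continuousAt
  have h2 : HasDerivAt (fun t : ℝ => 1 - (2 / Real.sqrt Real.pi) * ∫ u in (0:ℝ)..t, Real.exp (-u ^ 2))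
      (-(2 / Real.sqrt Real.pi * Real.exp (-y ^ 2))) y := by
    simpa using ((h1.const_mul (2 / Real.sqrt Real.pi)).const_sub 1)
  exact h2.congr_of_eventuallyEq (Filter.Eventually.of_forall fun t => erfc_eq t)
lemma erfc_continuous : Continuous erfc :=
  continuous_iff_continuousAt.2 fun y => (erfc_hasDerivAt y).continuousAt

lemma erfc_nonneg (y : ℝ) : 0 ≤ erfc y := by
  apply mul_nonneg (by positivity)
  exact MeasureTheory.setIntegral_nonneg measurableSet_Ioi fun u _ => (Real.exp_pos _).le

lemma erfc_zero : erfc 0 = 1 := by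
  rw [erfc, gauss_Ioi_zero]; field_simp

lemma integrable_gauss_shift (z : ℝ) :
    MeasureTheory.IntegrableOn (fun u : ℝ => Real.exp (-(u - z) ^ 2)) (Set.Ioi z) := by
  have : MeasureTheory.Integrable (fun u : ℝ => Real.exp (-(u - z) ^ 2)) := by
    have := integrable_gauss.comp_sub_right z
    simpa using this
  exact this.integrableOn

lemma gauss_shift_integral (z : ℝ) :
    ∫ u in Set.Ioi z, Real.exp (-(u - z) ^ 2) = Real.sqrt Real.pi / 2 := by
  have h := (MeasureTheory.measurePreserving_add_right (volume : Measure ℝ) z).setIntegral_preimage_emb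
    (measurableEmbedding_addRight z) (fun u : ℝ => Real.exp (-(u - z) ^ 2)) (Set.Ioi z)
  have hpre : (fun x : ℝ => x + z) ⁻¹' Set.Ioi z = Set.Ioi 0 := by
    ext x; simp [Set.mem_preimage, Set.mem_Ioi]
  rw [hpre] at h
  rw [← h]
  simp only [add_sub_cancel_right]
  exact gauss_Ioi_zero

lemma erfc_le {z : ℝ} (hz : 0 ≤ z) : erfc z ≤ Real.exp (-z ^ 2) := by
  rw [erfc]
  have hmono : ∫ u in Set.Ioi z, Real.exp (-u ^ 2)
      ≤ ∫ u in Set.Ioi z, Real.exp (-z ^ 2) * Real.exp (-(u - z) ^ 2) := by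
    apply MeasureTheory.setIntegral_mono_on integrable_gauss.integrableOn
      ((integrable_gauss_shift z).const_mul _) measurableSet_Ioi
    intro u hu
    rw [← Real.exp_add]
    apply Real.exp_le_exp.2
    have : z ≤ u := (Set.mem_Ioi.1 hu).le
    nlinarith
  have heq : ∫ u in Set.Ioi z, Real.exp (-z ^ 2) * Real.exp (-(u - z) ^ 2)
      = Real.exp (-z ^ 2) * (Real.sqrt Real.pi / 2) := by
    rw [MeasureTheory.integral_const_mul, gauss_shift_integral]
  calc (2 / Real.sqrt Real.pi) * ∫ u in Set.Ioi z, Real.exp (-u ^ 2)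
      ≤ (2 / Real.sqrt Real.pi) * (Real.exp (-z ^ 2) * (Real.sqrt Real.pi / 2)) := by
        apply mul_le_mul_of_nonneg_left _ (by positivity)
        rw [← heq]; exact hmono
    _ = Real.exp (-z ^ 2) := by field_simp

lemma tendsto_exp_neg_sq : Filter.Tendsto (fun z : ℝ => Real.exp (-z ^ 2)) atTop (nhds 0) := by
  apply Real.tendsto_exp_atBot.comp
  apply Filter.tendsto_neg_atBot_iff.mpr
  exact tendsto_pow_atTop (by norm_num)

lemma erfc_tendsto_zero : Filter.Tendsto erfc atTop (nhds 0) := by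
  apply squeeze_zero' (Filter.Eventually.of_forall erfc_nonneg) _ tendsto_exp_neg_sq
  filter_upwards [Filter.eventually_ge_atTop (0:ℝ)] with z hz using erfc_le hz

lemma tendsto_pow_mul_exp (k : ℕ) {b : ℝ} (hb : 0 < b) :
    Filter.Tendsto (fun x : ℝ => x ^ k * Real.exp (-b * x ^ 2)) atTop (nhds 0) := by
  have h := rpow_mul_exp_neg_mul_sq_isLittleO_exp_neg hb (k : ℝ)
  have h2 : Filter.Tendsto (fun x : ℝ => Real.exp (-(1 / 2 : ℝ) * x)) atTop (nhds 0) := by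
    apply Real.tendsto_exp_atBot.comp
    have : Filter.Tendsto (fun x : ℝ => (1 / 2 : ℝ) * x) atTop atTop :=
      tendsto_id.const_mul_atTop (by norm_num)
    exact (Filter.tendsto_neg_atBot_iff.mpr this).congr fun x => by ring
  have h3 := h.isBigO.trans_tendsto h2
  apply h3.congr'
  filter_upwards [Filter.eventually_ge_atTop (0:ℝ)] with x hx
  rw [Real.rpow_natCast]
noncomputable def Bfun (z : ℝ) : ℝ := z * erfc z - Real.exp (-z ^ 2) / Real.sqrt Real.pi

lemma B_hasDerivAt (z : ℝ) : HasDerivAt Bfun (erfc z) z := by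
  have h1 : HasDerivAt (fun z : ℝ => z * erfc z)
      (1 * erfc z + z * (-(2 / Real.sqrt Real.pi * Real.exp (-z ^ 2)))) z :=
    (hasDerivAt_id z).mul (erfc_hasDerivAt z)
  have hin : HasDerivAt (fun z : ℝ => -z ^ 2) (-(2 * z ^ 1)) z := (hasDerivAt_pow 2 z).neg
  have h2 : HasDerivAt (fun z : ℝ => Real.exp (-z ^ 2) / Real.sqrt Real.pi)
      (Real.exp (-z ^ 2) * -(2 * z ^ 1) / Real.sqrt Real.pi) z := hin.exp.div_const _
  have h := h1.sub h2
  refine h.congr_deriv ?_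
  have hπ : Real.sqrt Real.pi ≠ 0 := ne_of_gt sqrt_pi_pos
  field_simp
  ring

lemma B_tendsto : Filter.Tendsto Bfun atTop (nhds 0) := by
  have h1 : Filter.Tendsto (fun z : ℝ => z * erfc z) atTop (nhds 0) := by
    apply squeeze_zero' (g := fun z : ℝ => z ^ 1 * Real.exp (-1 * z ^ 2))
    · filter_upwards [Filter.eventually_ge_atTop (0:ℝ)] with z hz
      exact mul_nonneg hz (erfc_nonneg z)
    · filter_upwards [Filter.eventually_ge_atTop (0:ℝ)] with z hz
      have := erfc_le hz
      have h' : -1 * z ^ 2 = -z ^ 2 := by ring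
      rw [pow_one, h']
      exact mul_le_mul_of_nonneg_left this hz
    · exact tendsto_pow_mul_exp 1 one_pos
  have h2 : Filter.Tendsto (fun z : ℝ => Real.exp (-z ^ 2) / Real.sqrt Real.pi) atTop (nhds 0) := by
    simpa using tendsto_exp_neg_sq.div_const (Real.sqrt Real.pi)
  have h3 : Filter.Tendsto Bfun atTop (nhds (0 - 0)) := h1.sub h2
  simpa using h3

lemma sqrt_two_pos : (0:ℝ) < Real.sqrt 2 := Real.sqrt_pos.2 (by norm_num)
lemma sq_sqrt_two : Real.sqrt 2 ^ 2 = 2 := Real.sq_sqrt (by norm_num)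

lemma tendsto_div_sqrt_two_atTop (x : ℝ) :
    Filter.Tendsto (fun y : ℝ => (x + y) / Real.sqrt 2) atTop atTop :=
  (Filter.tendsto_atTop_add_const_left atTop x tendsto_id).atTop_div_const sqrt_two_pos

lemma inner_int (x : ℝ) :
    ∫ y in Set.Ioi (0:ℝ), erfc ((x + y) / Real.sqrt 2)
      = Real.sqrt 2 * (Real.exp (-x ^ 2 / 2) / Real.sqrt Real.pi)
          - x * erfc (x / Real.sqrt 2) := by
  have h2 : Real.sqrt 2 ≠ 0 := ne_of_gt sqrt_two_pos
  have hderiv : ∀ y ∈ Set.Ici (0:ℝ),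
      HasDerivAt (fun y : ℝ => Real.sqrt 2 * Bfun ((x + y) / Real.sqrt 2))
        (erfc ((x + y) / Real.sqrt 2)) y := by
    intro y _
    have hadd : HasDerivAt (fun y : ℝ => (x + y) / Real.sqrt 2) (1 / Real.sqrt 2) y :=
      ((hasDerivAt_id y).const_add x).div_const _
    have h := ((B_hasDerivAt ((x + y) / Real.sqrt 2)).comp y hadd).const_mul (Real.sqrt 2)
    refine h.congr_deriv ?_
    field_simp
  have htend : Filter.Tendsto (fun y : ℝ => Real.sqrt 2 * Bfun ((x + y) / Real.sqrt 2))
      atTop (nhds (Real.sqrt 2 * 0)) :=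
    (B_tendsto.comp (tendsto_div_sqrt_two_atTop x)).const_mul _
  have := MeasureTheory.integral_Ioi_of_hasDerivAt_of_nonneg' hderiv
    (fun y _ => erfc_nonneg _) htend
  rw [this]
  have hsq : ((x + 0) / Real.sqrt 2) = x / Real.sqrt 2 := by rw [add_zero]
  rw [hsq, Bfun]
  have hpow : (x / Real.sqrt 2) ^ 2 = x ^ 2 / 2 := by
    rw [div_pow, sq_sqrt_two]
  rw [hpow]
  have : Real.sqrt 2 * (x / Real.sqrt 2) = x := by field_simp
  rw [mul_sub, ← mul_assoc, this]
  ring_nf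

lemma outer_int :
    ∫ x in Set.Ioi (0:ℝ),
        (Real.sqrt 2 * (Real.exp (-x ^ 2 / 2) / Real.sqrt Real.pi)
          - x * erfc (x / Real.sqrt 2)) = 1 / 2 := by
  have h2 : Real.sqrt 2 ≠ 0 := ne_of_gt sqrt_two_pos
  have hπ : Real.sqrt Real.pi ≠ 0 := ne_of_gt sqrt_pi_pos
  set H : ℝ → ℝ := fun x =>
    -(1/2) * erfc (x / Real.sqrt 2)
      + x * Real.exp (-x ^ 2 / 2) / (Real.sqrt 2 * Real.sqrt Real.pi)
      - (1/2) * x ^ 2 * erfc (x / Real.sqrt 2) with hH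
  have hexppow : ∀ x : ℝ, Real.exp (-(x / Real.sqrt 2) ^ 2) = Real.exp (-x ^ 2 / 2) := by
    intro x
    rw [div_pow, sq_sqrt_two]
    ring_nf
  have hderiv : ∀ x ∈ Set.Ici (0:ℝ), HasDerivAt H
      (Real.sqrt 2 * (Real.exp (-x ^ 2 / 2) / Real.sqrt Real.pi)
        - x * erfc (x / Real.sqrt 2)) x := by
    intro x _
    have hdiv : HasDerivAt (fun x : ℝ => x / Real.sqrt 2) (1 / Real.sqrt 2) x :=
      (hasDerivAt_id x).div_const _
    have herfc : HasDerivAt (fun x : ℝ => erfc (x / Real.sqrt 2))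
        (-(2 / Real.sqrt Real.pi * Real.exp (-(x / Real.sqrt 2) ^ 2)) * (1 / Real.sqrt 2)) x :=
      (erfc_hasDerivAt _).comp x hdiv
    have hin : HasDerivAt (fun x : ℝ => -x ^ 2 / 2) (-(2 * x ^ 1) / 2) x :=
      ((hasDerivAt_pow 2 x).neg).div_const 2
    have hexp : HasDerivAt (fun x : ℝ => Real.exp (-x ^ 2 / 2))
        (Real.exp (-x ^ 2 / 2) * (-(2 * x ^ 1) / 2)) x := hin.exp
    have hmul : HasDerivAt (fun x : ℝ => x * Real.exp (-x ^ 2 / 2))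
        (1 * Real.exp (-x ^ 2 / 2) + x * (Real.exp (-x ^ 2 / 2) * (-(2 * x ^ 1) / 2))) x :=
      (hasDerivAt_id x).mul hexp
    have hsq : HasDerivAt (fun x : ℝ => (1/2 : ℝ) * x ^ 2 * erfc (x / Real.sqrt 2))
        ((1/2 : ℝ) * (2 * x ^ 1) * erfc (x / Real.sqrt 2)
          + (1/2 : ℝ) * x ^ 2 * (-(2 / Real.sqrt Real.pi * Real.exp (-(x / Real.sqrt 2) ^ 2))
              * (1 / Real.sqrt 2))) x := by
      have := (((hasDerivAt_pow 2 x).const_mul (1/2 : ℝ)).mul herfc)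
      refine this.congr_deriv ?_
      norm_num
    have h := ((herfc.const_mul (-(1/2) : ℝ)).add (hmul.div_const (Real.sqrt 2 * Real.sqrt Real.pi))).sub hsq
    refine h.congr_deriv ?_
    rw [hexppow x]
    have s2 : Real.sqrt 2 * Real.sqrt 2 = 2 := by
      have := sq_sqrt_two; nlinarith
    field_simp
    linear_combination (-Real.exp (-(x ^ 2 / 2))) * sq_sqrt_two
  have hpos : ∀ x ∈ Set.Ioi (0:ℝ),
      0 ≤ Real.sqrt 2 * (Real.exp (-x ^ 2 / 2) / Real.sqrt Real.pi)
        - x * erfc (x / Real.sqrt 2) := by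
    intro x _
    rw [← inner_int x]
    exact MeasureTheory.setIntegral_nonneg measurableSet_Ioi fun y _ => erfc_nonneg _
  have htendsto : Filter.Tendsto H atTop (nhds 0) := by
    have hxdiv : Filter.Tendsto (fun x : ℝ => x / Real.sqrt 2) atTop atTop :=
      tendsto_id.atTop_div_const sqrt_two_pos
    have h1 : Filter.Tendsto (fun x : ℝ => -(1/2 : ℝ) * erfc (x / Real.sqrt 2)) atTop (nhds 0) := by
      simpa using (erfc_tendsto_zero.comp hxdiv).const_mul (-(1/2 : ℝ))
    have h2 : Filter.Tendsto
        (fun x : ℝ => x * Real.exp (-x ^ 2 / 2) / (Real.sqrt 2 * Real.sqrt Real.pi))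
        atTop (nhds 0) := by
      have := (tendsto_pow_mul_exp 1 (b := 1/2) (by norm_num)).div_const
        (Real.sqrt 2 * Real.sqrt Real.pi)
      simp only [zero_div] at this
      apply this.congr
      intro x
      congr 2
      · rw [pow_one]
      · ring
    have h3 : Filter.Tendsto (fun x : ℝ => (1/2 : ℝ) * x ^ 2 * erfc (x / Real.sqrt 2))
        atTop (nhds 0) := by
      apply squeeze_zero' (g := fun x : ℝ => (1/2 : ℝ) * (x ^ 2 * Real.exp (-(1/2 : ℝ) * x ^ 2)))
      · filter_upwards with x
        exact mul_nonneg (by positivity) (erfc_nonneg _)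
      · filter_upwards [Filter.eventually_ge_atTop (0:ℝ)] with x hx
        have hle : erfc (x / Real.sqrt 2) ≤ Real.exp (-(x / Real.sqrt 2) ^ 2) :=
          erfc_le (by positivity)
        rw [hexppow x] at hle
        have : Real.exp (-x ^ 2 / 2) = Real.exp (-(1/2 : ℝ) * x ^ 2) := by ring_nf
        rw [this] at hle
        calc (1/2 : ℝ) * x ^ 2 * erfc (x / Real.sqrt 2)
            ≤ (1/2 : ℝ) * x ^ 2 * Real.exp (-(1/2 : ℝ) * x ^ 2) :=
              mul_le_mul_of_nonneg_left hle (by positivity)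
          _ = (1/2 : ℝ) * (x ^ 2 * Real.exp (-(1/2 : ℝ) * x ^ 2)) := by ring
      · simpa using (tendsto_pow_mul_exp 2 (b := 1/2) (by norm_num)).const_mul (1/2 : ℝ)
    have h4 := (h1.add h2).sub h3
    rw [show ((0:ℝ)+0)-0 = 0 by norm_num] at h4
    exact h4
  have := MeasureTheory.integral_Ioi_of_hasDerivAt_of_nonneg' hderiv hpos htendsto
  rw [this, hH]
  simp [erfc_zero]
lemma exp_arg_eq (ρ : ℝ) (n : ℕ) (s : ℝ) :
    2 * s / (Real.sqrt n * ρ) + 2 / (n * ρ ^ 2)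
      = Real.sqrt 2 * s * (Real.sqrt 2 / (Real.sqrt n * ρ))
        + (Real.sqrt 2 / (Real.sqrt n * ρ)) ^ 2 := by
  have e1 : Real.sqrt 2 * Real.sqrt 2 = 2 := Real.mul_self_sqrt (by norm_num)
  have e2 : Real.sqrt n * Real.sqrt n = n := Real.mul_self_sqrt (by positivity)
  rcases eq_or_ne (Real.sqrt n * ρ) 0 with h | h
  · rcases mul_eq_zero.1 h with h' | h'
    · have hn : (n:ℝ) = 0 := by rw [← e2, h', mul_zero]
      simp [h', hn]
    · simp [h', mul_zero]
  · have hn : Real.sqrt n ≠ 0 := fun h' => h (by rw [h', zero_mul])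
    have hρ : ρ ≠ 0 := fun h' => h (by rw [h', mul_zero])
    have hn0 : (n:ℝ) ≠ 0 := by rw [← e2]; exact mul_ne_zero hn hn
    field_simp
    linear_combination (-(Real.sqrt n * s * ρ * n) - n) * e1 + 2 * e2

lemma kernel_le {s c : ℝ} (hs : 0 ≤ s) (hc : 0 ≤ c) :
    Real.exp (Real.sqrt 2 * s * c + c ^ 2) * erfc (s / Real.sqrt 2 + c)
      ≤ Real.exp (-(s + 0) ^ 2 / 2) := by
  have hz : 0 ≤ s / Real.sqrt 2 + c := by positivity
  have h1 : erfc (s / Real.sqrt 2 + c) ≤ Real.exp (-(s / Real.sqrt 2 + c) ^ 2) := erfc_le hz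
  have hsq : (s / Real.sqrt 2 + c) ^ 2 = s ^ 2 / 2 + Real.sqrt 2 * s * c + c ^ 2 := by
    have e1 : Real.sqrt 2 * Real.sqrt 2 = 2 := Real.mul_self_sqrt (by norm_num)
    have h2 : Real.sqrt 2 ≠ 0 := ne_of_gt sqrt_two_pos
    have expand : (s / Real.sqrt 2 + c) ^ 2
        = s ^ 2 / (Real.sqrt 2 * Real.sqrt 2) + (2 / Real.sqrt 2) * s * c + c ^ 2 := by
      field_simp
      ring
    rw [expand, e1, Real.div_sqrt]
  calc Real.exp (Real.sqrt 2 * s * c + c ^ 2) * erfc (s / Real.sqrt 2 + c)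
      ≤ Real.exp (Real.sqrt 2 * s * c + c ^ 2) * Real.exp (-(s / Real.sqrt 2 + c) ^ 2) :=
        mul_le_mul_of_nonneg_left h1 (Real.exp_pos _).le
    _ = Real.exp ((Real.sqrt 2 * s * c + c ^ 2) + -(s / Real.sqrt 2 + c) ^ 2) := by
        rw [← Real.exp_add]
    _ = Real.exp (-(s + 0) ^ 2 / 2) := by
        congr 1
        rw [hsq]
        ring

lemma exp_sq_bound {x y : ℝ} (hx : 0 ≤ x) (hy : 0 ≤ y) :
    Real.exp (-(x + y) ^ 2 / 2) ≤ Real.exp (-x ^ 2 / 2) * Real.exp (-y ^ 2 / 2) := by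
  rw [← Real.exp_add]
  apply Real.exp_le_exp.2
  nlinarith

lemma tendsto_sqrt_nat : Filter.Tendsto (fun n : ℕ => Real.sqrt n) atTop atTop := by
  have h1 : Filter.Tendsto Real.sqrt atTop atTop := by
    apply Filter.tendsto_atTop_atTop.2
    intro b
    refine ⟨(max b 0) ^ 2, fun a ha => ?_⟩
    have h0 : 0 ≤ max b 0 := le_max_right _ _
    have := Real.sqrt_le_sqrt ha
    rw [Real.sqrt_sq h0] at this
    exact le_trans (le_max_left _ _) this
  exact h1.comp tendsto_natCast_atTop_atTop

lemma integrable_half_gauss : MeasureTheory.Integrable (fun x : ℝ => Real.exp (-x ^ 2 / 2)) := by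
  have h := integrable_exp_neg_mul_sq (show (0:ℝ) < 1/2 by norm_num)
  have : (fun x : ℝ => Real.exp (-x ^ 2 / 2)) = fun x : ℝ => Real.exp (-(1/2 : ℝ) * x ^ 2) := by
    funext x; ring_nf
  rw [this]
  exact h
theorem double_integral_kernel_tendsto (ρ : ℝ) (hρ : 0 < ρ) :
    Tendsto (fun n : ℕ =>
        (2 / ρ) *
          ∫ x in Set.Ioi (0 : ℝ), ∫ y in Set.Ioi (0 : ℝ),
            Real.exp (2 * (x + y) / (Real.sqrt n * ρ) + 2 / (n * ρ ^ 2)) *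
              erfc ((x + y) / Real.sqrt 2 + Real.sqrt 2 / (Real.sqrt n * ρ)))
      atTop (nhds (1 / ρ)) := by
  have hρ' : ρ ≠ 0 := ne_of_gt hρ
  set ν : Measure ℝ := volume.restrict (Set.Ioi 0) with hν
  set μ2 : Measure (ℝ × ℝ) := ν.prod ν with hμ2
  set F : ℕ → ℝ × ℝ → ℝ := fun n z =>
    Real.exp (2 * (z.1 + z.2) / (Real.sqrt n * ρ) + 2 / (n * ρ ^ 2)) *
      erfc ((z.1 + z.2) / Real.sqrt 2 + Real.sqrt 2 / (Real.sqrt n * ρ)) with hF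
  set G : ℝ × ℝ → ℝ := fun z => Real.exp (-z.1 ^ 2 / 2) * Real.exp (-z.2 ^ 2 / 2) with hG
  set L : ℝ × ℝ → ℝ := fun z => erfc ((z.1 + z.2) / Real.sqrt 2) with hL
  have hGint : Integrable G μ2 :=
    (integrable_half_gauss.restrict).mul_prod (integrable_half_gauss.restrict)
  have hae : ∀ᵐ z ∂μ2, z ∈ Set.Ioi (0:ℝ) ×ˢ Set.Ioi (0:ℝ) := by
    rw [hμ2, hν, Measure.prod_restrict]
    exact ae_restrict_mem (measurableSet_Ioi.prod measurableSet_Ioi)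
  have hmeas : ∀ n : ℕ, AEStronglyMeasurable (F n) μ2 := by
    intro n
    apply Continuous.aestronglyMeasurable
    apply Continuous.mul
    · apply Real.continuous_exp.comp
      apply Continuous.add _ continuous_const
      exact (continuous_const.mul (continuous_fst.add continuous_snd)).div_const _
    · apply erfc_continuous.comp
      exact ((continuous_fst.add continuous_snd).div_const _).add continuous_const
  have hbound : ∀ n : ℕ, ∀ z ∈ Set.Ioi (0:ℝ) ×ˢ Set.Ioi (0:ℝ), ‖F n z‖ ≤ G z := by
    intro n z hz
    have hx : (0:ℝ) ≤ z.1 := (Set.mem_Ioi.1 hz.1).le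
    have hy : (0:ℝ) ≤ z.2 := (Set.mem_Ioi.1 hz.2).le
    have hs : 0 ≤ z.1 + z.2 := add_nonneg hx hy
    have hc : 0 ≤ Real.sqrt 2 / (Real.sqrt n * ρ) := by positivity
    have hFnn : 0 ≤ F n z := mul_nonneg (Real.exp_pos _).le (erfc_nonneg _)
    rw [Real.norm_eq_abs, abs_of_nonneg hFnn]
    have heq : F n z = Real.exp (Real.sqrt 2 * (z.1 + z.2) * (Real.sqrt 2 / (Real.sqrt n * ρ))
          + (Real.sqrt 2 / (Real.sqrt n * ρ)) ^ 2) *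
        erfc ((z.1 + z.2) / Real.sqrt 2 + Real.sqrt 2 / (Real.sqrt n * ρ)) := by
      simp only [hF]
      rw [exp_arg_eq ρ n (z.1 + z.2)]
    rw [heq]
    calc Real.exp (Real.sqrt 2 * (z.1 + z.2) * (Real.sqrt 2 / (Real.sqrt n * ρ))
          + (Real.sqrt 2 / (Real.sqrt n * ρ)) ^ 2) *
        erfc ((z.1 + z.2) / Real.sqrt 2 + Real.sqrt 2 / (Real.sqrt n * ρ))
        ≤ Real.exp (-((z.1 + z.2) + 0) ^ 2 / 2) := kernel_le hs hc
      _ = Real.exp (-(z.1 + z.2) ^ 2 / 2) := by rw [add_zero]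
      _ ≤ G z := exp_sq_bound hx hy
  have hboundae : ∀ n, ∀ᵐ z ∂μ2, ‖F n z‖ ≤ G z := fun n =>
    hae.mono fun z hz => hbound n z hz
  have hconv : ∀ z : ℝ × ℝ, Tendsto (fun n : ℕ => F n z) atTop (nhds (L z)) := by
    intro z
    have hden : Tendsto (fun n : ℕ => Real.sqrt n * ρ) atTop atTop :=
      tendsto_sqrt_nat.atTop_mul_const hρ
    have h1 : Tendsto (fun n : ℕ => 2 * (z.1 + z.2) / (Real.sqrt n * ρ)) atTop (nhds 0) :=
      tendsto_const_nhds.div_atTop hden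
    have h2 : Tendsto (fun n : ℕ => 2 / ((n : ℝ) * ρ ^ 2)) atTop (nhds 0) :=
      tendsto_const_nhds.div_atTop
        (tendsto_natCast_atTop_atTop.atTop_mul_const (by positivity))
    have h3 : Tendsto (fun n : ℕ => Real.sqrt 2 / (Real.sqrt n * ρ)) atTop (nhds 0) :=
      tendsto_const_nhds.div_atTop hden
    have hA : Tendsto (fun n : ℕ =>
        Real.exp (2 * (z.1 + z.2) / (Real.sqrt n * ρ) + 2 / (n * ρ ^ 2))) atTop (nhds 1) := by
      have := (Real.continuous_exp.tendsto 0).comp (by simpa using h1.add h2)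
      simpa [Real.exp_zero, Function.comp_def] using this
    have hB : Tendsto (fun n : ℕ =>
        erfc ((z.1 + z.2) / Real.sqrt 2 + Real.sqrt 2 / (Real.sqrt n * ρ))) atTop
        (nhds (erfc ((z.1 + z.2) / Real.sqrt 2))) := by
      have := (erfc_continuous.tendsto ((z.1 + z.2) / Real.sqrt 2 + 0)).comp
        (tendsto_const_nhds.add h3)
      simpa [Function.comp_def] using this
    have := hA.mul hB
    rw [one_mul] at this
    exact this
  have hDCT := MeasureTheory.tendsto_integral_of_dominated_convergence G hmeas hGint hboundae
    (Filter.Eventually.of_forall hconv)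
  have hLbound : ∀ᵐ z ∂μ2, ‖L z‖ ≤ G z := by
    apply hae.mono
    intro z hz
    have hx : (0:ℝ) ≤ z.1 := (Set.mem_Ioi.1 hz.1).le
    have hy : (0:ℝ) ≤ z.2 := (Set.mem_Ioi.1 hz.2).le
    have hs : 0 ≤ z.1 + z.2 := add_nonneg hx hy
    rw [hL, Real.norm_eq_abs, abs_of_nonneg (erfc_nonneg _)]
    have h := kernel_le (s := z.1 + z.2) (c := 0) hs le_rfl
    simp only [mul_zero, ne_eq, OfNat.ofNat_ne_zero, not_false_eq_true, zero_pow, add_zero,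
      Real.exp_zero, one_mul] at h
    calc erfc ((z.1 + z.2) / Real.sqrt 2) ≤ Real.exp (-(z.1 + z.2) ^ 2 / 2) := h
      _ ≤ G z := exp_sq_bound hx hy
  have hLmeas : AEStronglyMeasurable L μ2 := by
    apply Continuous.aestronglyMeasurable
    exact erfc_continuous.comp ((continuous_fst.add continuous_snd).div_const _)
  have hLint : Integrable L μ2 := hGint.mono' hLmeas hLbound
  have hFint : ∀ n, Integrable (F n) μ2 := fun n => hGint.mono' (hmeas n) (hboundae n)
  have hval : ∫ z, L z ∂μ2 = 1 / 2 := by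
    have h := MeasureTheory.integral_integral (μ := ν) (ν := ν)
      (f := fun x y => erfc ((x + y) / Real.sqrt 2)) hLint
    rw [← h, hν]
    simp only [inner_int]
    exact outer_int
  have hiter : ∀ n : ℕ,
      (∫ x in Set.Ioi (0 : ℝ), ∫ y in Set.Ioi (0 : ℝ),
          Real.exp (2 * (x + y) / (Real.sqrt n * ρ) + 2 / (n * ρ ^ 2)) *
            erfc ((x + y) / Real.sqrt 2 + Real.sqrt 2 / (Real.sqrt n * ρ)))
        = ∫ z, F n z ∂μ2 := fun n =>
    MeasureTheory.integral_integral (μ := ν) (ν := ν)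
      (f := fun x y => Real.exp (2 * (x + y) / (Real.sqrt n * ρ) + 2 / (n * ρ ^ 2)) *
        erfc ((x + y) / Real.sqrt 2 + Real.sqrt 2 / (Real.sqrt n * ρ))) (hFint n)
  rw [hval] at hDCT
  have final := hDCT.const_mul (2 / ρ)
  have hval2 : (2 / ρ) * (1 / 2) = 1 / ρ := by field_simp
  rw [hval2] at final
  apply final.congr
  intro n
  rw [hiter n]
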